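/- arXiv:1410.6402 — 4 statements merged into one kernel-verified Lean document; each statement's English description precedes it below -/
import Mathlib

section
/- Let δ ∈ (0,1) and let μ : [t_δ, t] → ℝ be differentiable with μ'(s) + μ(s)² ≥ (1 - δ/2)² for all s ∈ [t_δ, t]. If μ(s₀) > 1 - δ/2 for some s₀ ∈ [t_δ, t), then μ(s) > 1 - δ/2 for all s ∈ [s₀, t]; more generally, if μ(s₀) ∈ (0, 1 - δ/2) then μ is strictly increasing at s₀. -/
/-!
Writing `v = μ - c` with `c = 1 - δ/2`, the Riccati inequality `μ' + μ² ≥ c²` becomes the linear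
inequality `v' ≥ -(μ + c) v`. Hence `v · exp (∫ (μ + c))` is nondecreasing, so `v` stays positive
once it is. Where `0 < μ < c` one reads off `μ' ≥ c² - μ² > 0` directly.
-/

open Set Real

theorem monotoneOn_mul_exp_integral_of_neg_mul_le_deriv {v v' k : ℝ → ℝ} {a b : ℝ}
    (hk : ContinuousOn k (Icc a b)) (hv : ContinuousOn v (Icc a b))
    (hv' : ∀ x ∈ Ioo a b, HasDerivAt v (v' x) x)
    (hineq : ∀ x ∈ Ioo a b, -(k x * v x) ≤ v' x) :
    MonotoneOn (fun x ↦ v x * exp (∫ y in a..x, k y)) (Icc a b) := by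
  rcases lt_or_ge b a with hba | hab
  · simp only [Icc_eq_empty_of_lt hba]
    exact subsingleton_empty.monotoneOn _
  have hK : ContinuousOn (fun x ↦ ∫ y in a..x, k y) (Icc a b) := by
    rw [← uIcc_of_le hab] at hk ⊢
    exact intervalIntegral.continuousOn_primitive_interval hk.integrableOn_uIcc
  have hK' : ∀ x ∈ Ioo a b, HasDerivAt (fun x ↦ ∫ y in a..x, k y) (k x) x := fun x hx ↦
    intervalIntegral.integral_hasDerivAt_right
      ((hk.mono (Icc_subset_Icc_right hx.2.le)).intervalIntegrable_of_Icc hx.1.le)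
      ((hk.mono Ioo_subset_Icc_self).stronglyMeasurableAtFilter isOpen_Ioo x hx)
      (hk.continuousAt (Icc_mem_nhds hx.1 hx.2))
  refine monotoneOn_of_hasDerivWithinAt_nonneg (convex_Icc a b) (hv.mul hK.rexp)
    (f' := fun x ↦ (v' x + k x * v x) * exp (∫ y in a..x, k y)) ?_ ?_
  · intro x hx
    rw [interior_Icc] at hx
    exact ((hv' x hx).mul (hK' x hx).exp).hasDerivWithinAt.congr_deriv (by ring)
  · intro x hx
    rw [interior_Icc] at hx
    exact mul_nonneg (by linarith [hineq x hx]) (exp_pos _).le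

theorem lt_of_sq_le_deriv_add_sq {μ μ' : ℝ → ℝ} {a b c : ℝ} (hμ : ContinuousOn μ (Icc a b))
    (hμ' : ∀ s ∈ Ioo a b, HasDerivAt μ (μ' s) s) (hineq : ∀ s ∈ Ioo a b, c ^ 2 ≤ μ' s + μ s ^ 2)
    (ha : c < μ a) : ∀ s ∈ Icc a b, c < μ s := by
  intro s hs
  have hmono := monotoneOn_mul_exp_integral_of_neg_mul_le_deriv (v := fun s ↦ μ s - c)
    (k := fun s ↦ μ s + c) (hμ.add continuousOn_const) (hμ.sub continuousOn_const)
    (fun s hs ↦ (hμ' s hs).sub_const c) (fun s hs ↦ by nlinarith [hineq s hs])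
    (left_mem_Icc.2 (hs.1.trans hs.2)) hs hs.1
  simp only [intervalIntegral.integral_same, exp_zero, mul_one] at hmono
  have : 0 < (μ s - c) * exp (∫ y in a..s, μ y + c) := (sub_pos.2 ha).trans_le hmono
  linarith [pos_of_mul_pos_left this (exp_pos _).le]

theorem stmt_2_general (δ tδ t : ℝ)
    (μ μ' : ℝ → ℝ)
    (hderiv : ∀ s ∈ Set.Icc tδ t, HasDerivAt μ (μ' s) s)
    (hineq : ∀ s ∈ Set.Icc tδ t, (1 - δ / 2) ^ 2 ≤ μ' s + (μ s) ^ 2) :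
    (∀ s₀ ∈ Set.Ico tδ t, 1 - δ / 2 < μ s₀ → ∀ s ∈ Set.Icc s₀ t, 1 - δ / 2 < μ s) ∧
    (∀ s₀ ∈ Set.Icc tδ t, μ s₀ ∈ Set.Ioo (0:ℝ) (1 - δ / 2) → 0 < μ' s₀) := by
  refine ⟨fun s₀ hs₀ hgt ↦ ?_, fun s₀ hs₀ hmem ↦ ?_⟩
  · have hsub : Icc s₀ t ⊆ Icc tδ t := Icc_subset_Icc_left hs₀.1
    exact lt_of_sq_le_deriv_add_sq (HasDerivAt.continuousOn fun s hs ↦ hderiv s (hsub hs))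
      (fun s hs ↦ hderiv s (hsub (Ioo_subset_Icc_self hs)))
      (fun s hs ↦ hineq s (hsub (Ioo_subset_Icc_self hs))) hgt
  · nlinarith [hineq s₀ hs₀, hmem.1, hmem.2]

theorem stmt_2 (δ tδ t : ℝ) (hδ : δ ∈ Set.Ioo (0:ℝ) 1) (ht : tδ ≤ t)
    (μ μ' : ℝ → ℝ)
    (hderiv : ∀ s ∈ Set.Icc tδ t, HasDerivAt μ (μ' s) s)
    (hineq : ∀ s ∈ Set.Icc tδ t, (1 - δ / 2) ^ 2 ≤ μ' s + (μ s) ^ 2) :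
    (∀ s₀ ∈ Set.Ico tδ t, 1 - δ / 2 < μ s₀ → ∀ s ∈ Set.Icc s₀ t, 1 - δ / 2 < μ s) ∧
    (∀ s₀ ∈ Set.Icc tδ t, μ s₀ ∈ Set.Ioo (0:ℝ) (1 - δ / 2) → 0 < μ' s₀) :=
  stmt_2_general δ tδ t μ μ' hderiv hineq
end

section
/- Let φ : [t₀, T) → ℝ be differentiable with φ(t₀) ≥ 0, φ(t) ≤ 1 for all t, and φ'(t) = (1 - φ(t)²)·ψ(t) where ψ(t) > 1/2 for all t ∈ [t₀, T). Then φ(t) > 0 for all t ∈ (t₀, T). -/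
/-!
Zero is a barrier for `φ`: wherever `φ = 0` the equation gives `φ' = ψ > 0`, so `φ` cannot cross
from `[0, ∞)` into the negative reals (a fencing argument), and it cannot touch `0` after `t₀`
either, since such a touching point would be an interior minimum with nonzero derivative.
-/

open Set

theorem nonneg_on_Ico_of_hasDerivAt_pos_of_eq_zero {f f' : ℝ → ℝ} {a b : ℝ}
    (hf : ∀ x ∈ Ico a b, HasDerivAt f (f' x) x) (ha : 0 ≤ f a)
    (hzero : ∀ x ∈ Ico a b, f x = 0 → 0 < f' x) :
    ∀ x ∈ Ico a b, 0 ≤ f x := by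
  intro x hx
  have hIcc : Icc a x ⊆ Ico a b := Icc_subset_Ico_right hx.2
  have hIco : Ico a x ⊆ Ico a b := Ico_subset_Ico_right hx.2.le
  refine image_le_of_deriv_right_lt_deriv_boundary' (f := fun _ => 0) (f' := fun _ => 0)
    continuousOn_const (fun _ _ => hasDerivWithinAt_const _ _ _) ha
    (fun y hy => (hf y (hIcc hy)).continuousAt.continuousWithinAt)
    (fun y hy => (hf y (hIco hy)).hasDerivWithinAt)
    (fun y hy hy0 => hzero y (hIco hy) hy0.symm) ⟨hx.1, le_rfl⟩

theorem pos_on_Ioo_of_hasDerivAt_pos_of_eq_zero {f f' : ℝ → ℝ} {a b : ℝ}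
    (hf : ∀ x ∈ Ico a b, HasDerivAt f (f' x) x) (ha : 0 ≤ f a)
    (hzero : ∀ x ∈ Ico a b, f x = 0 → 0 < f' x) :
    ∀ x ∈ Ioo a b, 0 < f x := by
  have hnonneg := nonneg_on_Ico_of_hasDerivAt_pos_of_eq_zero hf ha hzero
  intro x hx
  have hx' : x ∈ Ico a b := Ioo_subset_Ico_self hx
  refine (hnonneg x hx').lt_of_ne' fun hx0 => ?_
  have hmin : IsLocalMin f x := by
    filter_upwards [Ioo_mem_nhds hx.1 hx.2] with y hy
    rw [hx0]
    exact hnonneg y (Ioo_subset_Ico_self hy)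
  exact (hzero x hx' hx0).ne' (hmin.hasDerivAt_eq_zero (hf x hx'))

theorem stmt_5_general (t₀ T : ℝ)
    (φ ψ : ℝ → ℝ)
    (hderiv : ∀ s ∈ Set.Ico t₀ T, HasDerivAt φ ((1 - (φ s) ^ 2) * ψ s) s)
    (h0 : 0 ≤ φ t₀)
    (hψ : ∀ s ∈ Set.Ico t₀ T, 1 / 2 < ψ s) :
    ∀ s ∈ Set.Ioo t₀ T, 0 < φ s := by
  refine pos_on_Ioo_of_hasDerivAt_pos_of_eq_zero hderiv h0 fun s hs hφs => ?_
  rw [hφs]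
  linarith [hψ s hs]

theorem stmt_5 (t₀ T : ℝ) (hT : t₀ < T)
    (φ ψ : ℝ → ℝ)
    (hderiv : ∀ s ∈ Set.Ico t₀ T, HasDerivAt φ ((1 - (φ s) ^ 2) * ψ s) s)
    (h0 : 0 ≤ φ t₀) (h1 : ∀ s ∈ Set.Ico t₀ T, φ s ≤ 1)
    (hψ : ∀ s ∈ Set.Ico t₀ T, 1 / 2 < ψ s) :
    ∀ s ∈ Set.Ioo t₀ T, 0 < φ s :=
  stmt_5_general t₀ T φ ψ hderiv h0 hψ
end

section
/- Let φ : [t₀, ∞) → ℝ be differentiable with 0 < φ(t₀) ≤ 1, φ(t) ≤ 1 for all t, and φ'(t) = (1 - φ(t)²)·ψ(t) with ψ(t) ≥ 1 - C·e^{-2t} for a constant C > 0. Then 1 - φ(t) ≤ C'·e^{-2t} for some constant C' and all large t; that is, φ(t) = 1 + O(e^{-2t}). -/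
/-!
Put `q = (1 - φ) / (1 + φ)`. Wherever `1 + φ ≠ 0` the equation gives `q' = -2ψq`, so with
`ψ ≥ 1 - Ce^{-2t}` and `q ≥ 0` the product `q · exp (2t + Ce^{-2t})` is nonincreasing; hence
`q ≤ C'e^{-2t}`, and `1 - φ = q (1 + φ) ≤ 2q`. That `1 + φ` never vanishes follows from
`(1 + φ)' = (1 + φ)(1 - φ)ψ` with `(1 - φ)ψ` bounded below while `1 + φ > 0`: such a function
decays at most exponentially, so it stays above a positive exponential barrier.
-/

open Real Set

theorem pos_of_hasDerivAt_ge_neg_mul {f f' : ℝ → ℝ} {a K : ℝ}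
    (hf : ∀ t, a ≤ t → HasDerivAt f (f' t) t) (ha : 0 < f a)
    (hK : ∀ t, a ≤ t → 0 < f t → -(K * f t) ≤ f' t) {t : ℝ} (ht : a ≤ t) : 0 < f t := by
  -- `f` stays above the barrier `f a * exp (-(K + 1) (s - a))`, which decays strictly faster.
  set B : ℝ → ℝ := fun s => f a * exp (-(K + 1) * (s - a))
  have hB : ∀ s, HasDerivAt (fun s => -B s) (-(-(K + 1) * B s)) s := fun s => by
    refine ((((hasDerivAt_id s).sub_const a).const_mul (-(K + 1))).exp.const_mul
      (f a)).neg.congr_deriv ?_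
    simp only [B, id]
    ring
  have hle : -f t ≤ -B t := by
    refine image_le_of_deriv_right_lt_deriv_boundary (f' := fun s => -f' s)
      (fun s hs => (hf s hs.1).continuousAt.continuousWithinAt.neg)
      (fun s hs => (hf s hs.1).neg.hasDerivWithinAt) (by simp [B]) hB ?_ ⟨ht, le_rfl⟩
    intro s hs hfs
    have hfB : f s = B s := neg_inj.mp hfs
    have hBs : 0 < B s := by positivity
    have hdecay := hK s hs.1 (hfB ▸ hBs)
    rw [hfB] at hdecay
    linarith
  have hBt : 0 < B t := by positivity
  linarith

theorem antitoneOn_mul_exp_of_hasDerivAt {s : Set ℝ} (hs : Convex ℝ s) {f f' G g : ℝ → ℝ}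
    (hf : ∀ t ∈ s, HasDerivAt f (f' t) t) (hG : ∀ t ∈ s, HasDerivAt G (g t) t)
    (hle : ∀ t ∈ s, f' t + g t * f t ≤ 0) : AntitoneOn (fun t => f t * exp (G t)) s := by
  have hderiv : ∀ t ∈ s, HasDerivAt (fun t => f t * exp (G t))
      ((f' t + g t * f t) * exp (G t)) t := fun t ht => by
    refine ((hf t ht).mul (hG t ht).exp).congr_deriv ?_
    ring
  refine antitoneOn_of_hasDerivWithinAt_nonpos hs
    (fun t ht => (hderiv t ht).continuousAt.continuousWithinAt)
    (fun t ht => (hderiv t (interior_subset ht)).hasDerivWithinAt)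
    (fun t ht => mul_nonpos_of_nonpos_of_nonneg (hle t (interior_subset ht)) (exp_pos _).le)

theorem hasDerivAt_one_sub_div_one_add {φ : ℝ → ℝ} {c t : ℝ}
    (hφ : HasDerivAt φ ((1 - φ t ^ 2) * c) t) (h : 1 + φ t ≠ 0) :
    HasDerivAt (fun s => (1 - φ s) / (1 + φ s)) (-2 * c * ((1 - φ t) / (1 + φ t))) t := by
  refine ((hφ.const_sub 1).div (hφ.const_add 1) h).congr_deriv ?_
  field_simp
  ring

theorem one_add_pos_of_hasDerivAt {t₀ C : ℝ} (hC : 0 < C) {φ ψ : ℝ → ℝ}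
    (hderiv : ∀ t, t₀ ≤ t → HasDerivAt φ ((1 - φ t ^ 2) * ψ t) t)
    (h0 : 0 < φ t₀) (h1 : ∀ t, t₀ ≤ t → φ t ≤ 1)
    (hψ : ∀ t, t₀ ≤ t → 1 - C * exp (-2 * t) ≤ ψ t) {t : ℝ} (ht : t₀ ≤ t) :
    0 < 1 + φ t := by
  refine pos_of_hasDerivAt_ge_neg_mul (K := 2 * C * exp (-2 * t₀))
    (fun s hs => (hderiv s hs).const_add 1) (by linarith) (fun s hs _ => ?_) ht
  have hdecay : C * exp (-2 * s) ≤ C * exp (-2 * t₀) :=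
    mul_le_mul_of_nonneg_left (exp_le_exp.2 (by linarith)) hC.le
  have hψs := hψ s hs
  have hφs := h1 s hs
  have hbound : -(2 * C * exp (-2 * t₀)) ≤ (1 - φ s) * ψ s := by
    nlinarith [mul_le_mul_of_nonneg_left hψs (by linarith : (0:ℝ) ≤ 1 - φ s),
      (by positivity : 0 ≤ C * exp (-2 * s))]
  nlinarith

theorem stmt_6_general (t₀ C : ℝ) (hC : 0 < C)
    (φ ψ : ℝ → ℝ)
    (hderiv : ∀ t, t₀ ≤ t → HasDerivAt φ ((1 - (φ t) ^ 2) * ψ t) t)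
    (h0 : 0 < φ t₀)
    (h1 : ∀ t, t₀ ≤ t → φ t ≤ 1)
    (hψ : ∀ t, t₀ ≤ t → 1 - C * Real.exp (-2 * t) ≤ ψ t) :
    ∃ C' t₁ : ℝ, t₀ ≤ t₁ ∧ ∀ t, t₁ ≤ t → 1 - φ t ≤ C' * Real.exp (-2 * t) := by
  have hpos t (ht : t₀ ≤ t) := one_add_pos_of_hasDerivAt hC hderiv h0 h1 hψ ht
  set q : ℝ → ℝ := fun t => (1 - φ t) / (1 + φ t)
  have hq t (ht : t₀ ≤ t) : 0 ≤ q t := div_nonneg (by linarith [h1 t ht]) (hpos t ht).le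
  set G : ℝ → ℝ := fun t => 2 * t + C * exp (-2 * t)
  have hG t : HasDerivAt G (2 - 2 * C * exp (-2 * t)) t := by
    refine (((hasDerivAt_id t).const_mul 2).add
      (((hasDerivAt_id t).const_mul (-2)).exp.const_mul C)).congr_deriv ?_
    simp only [id]
    ring
  have hanti : AntitoneOn (fun t => q t * exp (G t)) (Ici t₀) :=
    antitoneOn_mul_exp_of_hasDerivAt (convex_Ici t₀)
      (fun t ht => hasDerivAt_one_sub_div_one_add (hderiv t ht) (hpos t ht).ne')
      (fun t _ => hG t) (fun t ht => by nlinarith [hq t ht, hψ t ht])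
  refine ⟨2 * (q t₀ * exp (G t₀)), t₀, le_rfl, fun t ht => ?_⟩
  have hGt : 1 ≤ exp (G t) * exp (-2 * t) := by
    rw [← exp_add]
    exact one_le_exp (by simp only [G]; nlinarith [exp_pos (-2 * t)])
  calc 1 - φ t = q t * (1 + φ t) := (div_mul_cancel₀ _ (hpos t ht).ne').symm
    _ ≤ q t * 2 := by gcongr; exacts [hq t ht, by linarith [h1 t ht]]
    _ ≤ 2 * (q t * exp (G t)) * exp (-2 * t) := by nlinarith [hq t ht]
    _ ≤ 2 * (q t₀ * exp (G t₀)) * exp (-2 * t) := by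
        gcongr 2 * ?_ * _
        exact hanti self_mem_Ici ht ht

theorem stmt_6 (t₀ C : ℝ) (hC : 0 < C)
    (φ ψ : ℝ → ℝ)
    (hderiv : ∀ t, t₀ ≤ t → HasDerivAt φ ((1 - (φ t) ^ 2) * ψ t) t)
    (h0 : 0 < φ t₀) (h0' : φ t₀ ≤ 1)
    (h1 : ∀ t, t₀ ≤ t → φ t ≤ 1)
    (hψ : ∀ t, t₀ ≤ t → 1 - C * Real.exp (-2 * t) ≤ ψ t) :
    ∃ C' t₁ : ℝ, t₀ ≤ t₁ ∧ ∀ t, t₁ ≤ t → 1 - φ t ≤ C' * Real.exp (-2 * t) :=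
  stmt_6_general t₀ C hC φ ψ hderiv h0 h1 hψ
end

section
/- Let a : ℝ → ℝ be given by a(s) = H(s)·J(s) where J > 0, J' = H·J, and assume the differential inequality (H·J)'(s) ≥ 2(n-1)²(H·J)(s) - C·J(s) on [t-1, t], together with: (i) H(t-1) ≥ -C₁ (uniform lower bound at time t-1), and (ii) J(s) ≤ C₂·e^{(n-1)(1-δ/(4(n-1)))s} for all s ∈ [t-1, t]. Then H(t)·J(t) ≥ -C₃·e^{(n-1)(1-δ/(4(n-1)))t} for a constant C₃ depending only on n, C, C₁, C₂, δ. In particular e^{-(n-1)t}·H(t)·J(t) ≥ -C₃·e^{-(δ/4)t} → 0 as t → ∞. -/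
/-! With `a = H J` and `k = 2(n-1)²`, the integrating factor `e^{-ks}` turns
`a' ≥ k a - C J` into `(e^{-ks} a)' ≥ -C e^{-ks} J`, and the density bound makes the right-hand
side `≥ -C C₂ e^{(α-k)(t-1)}` on `[t-1, t]`, where `α = (n-1) - δ/4 ≤ k`. Integrating over this
unit interval and bounding `a(t-1) ≥ -C₁ J(t-1)` gives `a(t) ≥ -C₃ e^{αt}`. -/

open Real Set

theorem sub_mul_sub_le_exp_neg_mul_of_hasDerivAt {a a' c : ℝ → ℝ} {k L t₀ t₁ : ℝ}
    (ht : t₀ ≤ t₁) (ha : ∀ s ∈ Icc t₀ t₁, HasDerivAt a (a' s) s)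
    (ha' : ∀ s ∈ Icc t₀ t₁, k * a s - c s ≤ a' s)
    (hc : ∀ s ∈ Icc t₀ t₁, exp (-k * s) * c s ≤ L) :
    exp (-k * t₀) * a t₀ - L * (t₁ - t₀) ≤ exp (-k * t₁) * a t₁ := by
  have hg : ∀ s ∈ Icc t₀ t₁,
      HasDerivAt (fun s ↦ exp (-k * s) * a s) (exp (-k * s) * (a' s - k * a s)) s := by
    intro s hs
    have he : HasDerivAt (fun s ↦ exp (-k * s)) (exp (-k * s) * -k) s := by
      simpa using ((hasDerivAt_id s).const_mul (-k)).exp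
    exact (he.mul (ha s hs)).congr_deriv (by ring)
  have hg' : ∀ s ∈ Icc t₀ t₁, -L ≤ exp (-k * s) * (a' s - k * a s) := fun s hs ↦ by
    nlinarith [hc s hs, ha' s hs, exp_pos (-k * s)]
  have hmvt := (convex_Icc t₀ t₁).mul_sub_le_image_sub_of_le_deriv
    (fun s hs ↦ (hg s hs).continuousAt.continuousWithinAt)
    (fun s hs ↦ (hg s (interior_subset hs)).differentiableAt.differentiableWithinAt)
    (fun s hs ↦ (hg s (interior_subset hs)).deriv ▸ hg' s (interior_subset hs))
    t₀ (left_mem_Icc.2 ht) t₁ (right_mem_Icc.2 ht) ht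
  linarith

theorem exp_neg_mul_mul_le_of_le_mul_exp {J : ℝ → ℝ} {k α C₂ t₀ t₁ : ℝ} (hαk : α ≤ k)
    (hC₂ : 0 ≤ C₂) (hJ : ∀ s ∈ Icc t₀ t₁, J s ≤ C₂ * exp (α * s)) :
    ∀ s ∈ Icc t₀ t₁, exp (-k * s) * J s ≤ C₂ * exp ((α - k) * t₀) := by
  intro s hs
  calc exp (-k * s) * J s ≤ exp (-k * s) * (C₂ * exp (α * s)) :=
        mul_le_mul_of_nonneg_left (hJ s hs) (exp_pos _).le
    _ = C₂ * exp ((α - k) * s) := by rw [mul_left_comm, ← exp_add]; ring_nf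
    _ ≤ C₂ * exp ((α - k) * t₀) := mul_le_mul_of_nonneg_left
        (exp_le_exp.2 (mul_le_mul_of_nonpos_left hs.1 (sub_nonpos.2 hαk))) hC₂

theorem neg_mul_exp_le_of_hasDerivAt_of_le_mul_exp {a a' J : ℝ → ℝ} {k α C C₁ C₂ t₀ t₁ : ℝ}
    (ht : t₀ ≤ t₁) (hαk : α ≤ k) (hC : 0 ≤ C) (hC₁ : 0 ≤ C₁) (hC₂ : 0 ≤ C₂)
    (ha : ∀ s ∈ Icc t₀ t₁, HasDerivAt a (a' s) s)
    (ha' : ∀ s ∈ Icc t₀ t₁, k * a s - C * J s ≤ a' s)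
    (ha₀ : -C₁ * J t₀ ≤ a t₀) (hJ : ∀ s ∈ Icc t₀ t₁, J s ≤ C₂ * exp (α * s)) :
    -((C₁ + C * (t₁ - t₀)) * C₂) * exp ((α - k) * t₀ + k * t₁) ≤ a t₁ := by
  have hJ' := exp_neg_mul_mul_le_of_le_mul_exp hαk hC₂ hJ
  have hint := sub_mul_sub_le_exp_neg_mul_of_hasDerivAt ht ha ha'
    (L := C * (C₂ * exp ((α - k) * t₀))) fun s hs ↦ by
      rw [mul_left_comm]; exact mul_le_mul_of_nonneg_left (hJ' s hs) hC
  have hstart : -C₁ * (C₂ * exp ((α - k) * t₀)) ≤ exp (-k * t₀) * a t₀ := by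
    nlinarith [hJ' t₀ (left_mem_Icc.2 ht), exp_pos (-k * t₀)]
  have hend : -((C₁ + C * (t₁ - t₀)) * C₂) * exp ((α - k) * t₀) ≤ exp (-k * t₁) * a t₁ := by
    nlinarith
  calc -((C₁ + C * (t₁ - t₀)) * C₂) * exp ((α - k) * t₀ + k * t₁)
      = exp (k * t₁) * (-((C₁ + C * (t₁ - t₀)) * C₂) * exp ((α - k) * t₀)) := by
        rw [exp_add]; ring
    _ ≤ exp (k * t₁) * (exp (-k * t₁) * a t₁) :=
        mul_le_mul_of_nonneg_left hend (exp_pos _).le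
    _ = a t₁ := by rw [← mul_assoc, ← exp_add]; simp
theorem stmt_19 (n : ℕ) (hn : 2 ≤ n) (C C₁ C₂ δ : ℝ)
    (hC : 0 < C) (hC₁ : 0 < C₁) (hC₂ : 0 < C₂) (hδ : 0 < δ) :
    ∃ C₃ : ℝ, 0 < C₃ ∧ ∀ (t : ℝ) (H J HJ' : ℝ → ℝ),
      (∀ s ∈ Set.Icc (t - 1) t, 0 < J s) →
      (∀ s ∈ Set.Icc (t - 1) t, HasDerivAt J (H s * J s) s) →
      (∀ s ∈ Set.Icc (t - 1) t, HasDerivAt (fun s => H s * J s) (HJ' s) s) →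
      (∀ s ∈ Set.Icc (t - 1) t,
        2 * (n - 1 : ℝ) ^ 2 * (H s * J s) - C * J s ≤ HJ' s) →
      (-C₁ ≤ H (t - 1)) →
      (∀ s ∈ Set.Icc (t - 1) t,
        J s ≤ C₂ * Real.exp ((n - 1 : ℝ) * (1 - δ / (4 * (n - 1 : ℝ))) * s)) →
      -C₃ * Real.exp ((n - 1 : ℝ) * (1 - δ / (4 * (n - 1 : ℝ))) * t) ≤ H t * J t ∧
      -C₃ * Real.exp (-(δ / 4) * t) ≤ Real.exp (-(n - 1 : ℝ) * t) * (H t * J t) := by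
  have hn₁ : (1 : ℝ) ≤ n - 1 := by
    have : (2 : ℝ) ≤ n := by exact_mod_cast hn
    linarith
  set α := (n - 1 : ℝ) * (1 - δ / (4 * (n - 1 : ℝ))) with hα_def
  have hα : α = (n - 1 : ℝ) - δ / 4 := by
    rw [hα_def]; field_simp
  set k := 2 * (n - 1 : ℝ) ^ 2
  have hαk : α ≤ k := by rw [hα]; nlinarith
  refine ⟨(C₁ + C) * C₂ * exp (k - α), by positivity,
    fun t H J HJ' hJ_pos _ hHJ hHJ' hH₀ hJ ↦ ?_⟩
  have hfirst : -((C₁ + C) * C₂ * exp (k - α)) * exp (α * t) ≤ H t * J t :=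
    calc -((C₁ + C) * C₂ * exp (k - α)) * exp (α * t)
        = -((C₁ + C * (t - (t - 1))) * C₂) * exp ((α - k) * (t - 1) + k * t) := by
          rw [show (α - k) * (t - 1) + k * t = (k - α) + α * t by ring, exp_add]; ring
      _ ≤ H t * J t := neg_mul_exp_le_of_hasDerivAt_of_le_mul_exp (by linarith) hαk hC.le
          hC₁.le hC₂.le hHJ hHJ'
          (mul_le_mul_of_nonneg_right hH₀ (hJ_pos _ ⟨le_rfl, by linarith⟩).le) hJ
  refine ⟨hfirst, ?_⟩
  calc -((C₁ + C) * C₂ * exp (k - α)) * exp (-(δ / 4) * t)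
      = exp (-(n - 1 : ℝ) * t) * (-((C₁ + C) * C₂ * exp (k - α)) * exp (α * t)) := by
        rw [mul_left_comm, ← exp_add, hα]; ring_nf
    _ ≤ exp (-(n - 1 : ℝ) * t) * (H t * J t) :=
        mul_le_mul_of_nonneg_left hfirst (exp_pos _).le
end
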